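/- Let Λ be a generic model set in ℝ^d with minimal interpoint distance at least r. Then LI(Λ) is a compact subset of X(r), LI(Λ) equals the closure of the translation orbit {t + Λ : t ∈ ℝ^d} in X(r), and the translation action of ℝ^d on LI(Λ) is minimal: every orbit is dense in LI(Λ). -/

import Mathlib

open scoped Pointwise
open Metric MeasureTheory Filter Topology

noncomputable section

abbrev Rd (d : ℕ) : Type := EuclideanSpace ℝ (Fin d)

/-- A set is uniformly discrete: distinct points are at distance at least `r` for some `r > 0`. -/
def UniformlyDiscrete {d : ℕ} (Λ : Set (Rd d)) : Prop :=
  ∃ r > 0, ∀ x ∈ Λ, ∀ y ∈ Λ, x ≠ y → r ≤ dist x y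

/-- A set is relatively dense: every closed ball of radius `R` meets it, for some `R > 0`. -/
def RelativelyDense {d : ℕ} (Λ : Set (Rd d)) : Prop :=
  ∃ R > 0, ∀ x : Rd d, ∃ y ∈ Λ, dist x y ≤ R

/-- A Delone set. -/
def IsDelone {d : ℕ} (Λ : Set (Rd d)) : Prop :=
  UniformlyDiscrete Λ ∧ RelativelyDense Λ

/-- The set Λ(W) obtained by cut and project from the lattice `Ltilde` and window `W`. -/
def cutProject {d : ℕ} {G : Type*} [AddCommGroup G]
    (Ltilde : AddSubgroup (Rd d × G)) (W : Set G) : Set (Rd d) :=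
  {x : Rd d | ∃ g : G, (x, g) ∈ Ltilde ∧ g ∈ W}

/-- The space `X(r)` of subsets of `ℝ^d` in which distinct points are at distance
at least `r`. -/
structure XType (d : ℕ) (r : ℝ) where
  (toSet : Set (Rd d))
  (minDist : ∀ x ∈ toSet, ∀ y ∈ toSet, x ≠ y → r ≤ dist x y)

/-- The entourage `U(K, ε)` of pairs `(S, S')` such that a translate of `S` by a vector
of norm at most `ε` agrees with `S'` on `K`. -/
def entourage {d : ℕ} {r : ℝ} (K : Set (Rd d)) (ε : ℝ) :
    Set (XType d r × XType d r) :=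
  {p | ∃ v : Rd d, ‖v‖ ≤ ε ∧
    ((fun x => v + x) '' p.1.toSet) ∩ K = p.2.toSet ∩ K}

/-- The collection of entourages `U(K, ε)`, `K` compact, `ε > 0`. -/
def entourages (d : ℕ) (r : ℝ) : Set (Set (XType d r × XType d r)) :=
  {E | ∃ (K : Set (Rd d)) (ε : ℝ), IsCompact K ∧ 0 < ε ∧ E = entourage K ε}

/-- Two sets are locally isomorphic if each finite patch of one occurs, up to
translation, in the other. -/
def LocIso {d : ℕ} (S S' : Set (Rd d)) : Prop :=
  (∀ ρ > (0:ℝ), ∀ v : Rd d, ∃ w : Rd d,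
    ((fun x => x - v) '' S) ∩ closedBall (0 : Rd d) ρ
      = ((fun x => x - w) '' S') ∩ closedBall (0 : Rd d) ρ) ∧
  (∀ ρ > (0:ℝ), ∀ v : Rd d, ∃ w : Rd d,
    ((fun x => x - v) '' S') ∩ closedBall (0 : Rd d) ρ
      = ((fun x => x - w) '' S) ∩ closedBall (0 : Rd d) ρ)

/-- The local isomorphism class of `S` inside `X(r)`. -/
def LIclass {d : ℕ} {r : ℝ} (S : XType d r) : Set (XType d r) :=
  {S' | LocIso S.toSet S'.toSet}

/-- The translation orbit of `S` inside `X(r)`. -/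
def orbitXT {d : ℕ} {r : ℝ} (S : XType d r) : Set (XType d r) :=
  {S' | ∃ t : Rd d, S'.toSet = (fun x => t + x) '' S.toSet}



section Helpers

variable {d : ℕ} {r : ℝ}

lemma mem_addImg {v x : Rd d} {S : Set (Rd d)} :
    x ∈ (fun y => v + y) '' S ↔ x - v ∈ S := by
  constructor
  · rintro ⟨y, hy, rfl⟩; simpa using hy
  · intro h; exact ⟨x - v, h, by module⟩

lemma mem_subImg {v x : Rd d} {S : Set (Rd d)} :
    x ∈ (fun y => y - v) '' S ↔ x + v ∈ S := by
  constructor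
  · rintro ⟨y, hy, rfl⟩; simpa using hy
  · intro h; exact ⟨x + v, h, by module⟩

lemma patchEq_iff {S S' : Set (Rd d)} {v w : Rd d} {ρ : ℝ} :
    ((fun x => x - v) '' S) ∩ closedBall (0 : Rd d) ρ
      = ((fun x => x - w) '' S') ∩ closedBall (0 : Rd d) ρ
    ↔ ∀ x : Rd d, ‖x‖ ≤ ρ → (x + v ∈ S ↔ x + w ∈ S') := by
  rw [Set.ext_iff]
  constructor
  · intro h x hx
    have := h x
    simp only [Set.mem_inter_iff, mem_subImg, mem_closedBall_zero_iff] at this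
    constructor
    · intro h1; exact (this.mp ⟨h1, hx⟩).1
    · intro h1; exact (this.mpr ⟨h1, hx⟩).1
  · intro h x
    simp only [Set.mem_inter_iff, mem_subImg, mem_closedBall_zero_iff]
    constructor
    · rintro ⟨h1, h2⟩; exact ⟨(h x h2).mp h1, h2⟩
    · rintro ⟨h1, h2⟩; exact ⟨(h x h2).mpr h1, h2⟩

lemma locIso_iff {S S' : Set (Rd d)} :
    LocIso S S' ↔
      (∀ ρ > (0:ℝ), ∀ v : Rd d, ∃ w : Rd d, ∀ x : Rd d, ‖x‖ ≤ ρ → (x + v ∈ S ↔ x + w ∈ S')) ∧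
      (∀ ρ > (0:ℝ), ∀ v : Rd d, ∃ w : Rd d, ∀ x : Rd d, ‖x‖ ≤ ρ → (x + v ∈ S' ↔ x + w ∈ S)) := by
  unfold LocIso
  constructor
  · rintro ⟨h1, h2⟩
    refine ⟨fun ρ hρ v => ?_, fun ρ hρ v => ?_⟩
    · obtain ⟨w, hw⟩ := h1 ρ hρ v; exact ⟨w, patchEq_iff.mp hw⟩
    · obtain ⟨w, hw⟩ := h2 ρ hρ v; exact ⟨w, patchEq_iff.mp hw⟩
  · rintro ⟨h1, h2⟩
    refine ⟨fun ρ hρ v => ?_, fun ρ hρ v => ?_⟩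
    · obtain ⟨w, hw⟩ := h1 ρ hρ v; exact ⟨w, patchEq_iff.mpr hw⟩
    · obtain ⟨w, hw⟩ := h2 ρ hρ v; exact ⟨w, patchEq_iff.mpr hw⟩

lemma locIso_symm {S S' : Set (Rd d)} (h : LocIso S S') : LocIso S' S := ⟨h.2, h.1⟩

lemma locIso_trans {S S' S'' : Set (Rd d)} (h1 : LocIso S S') (h2 : LocIso S' S'') :
    LocIso S S'' := by
  rw [locIso_iff] at h1 h2 ⊢
  constructor
  · intro ρ hρ v
    obtain ⟨w, hw⟩ := h1.1 ρ hρ v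
    obtain ⟨u, hu⟩ := h2.1 ρ hρ w
    exact ⟨u, fun x hx => (hw x hx).trans (hu x hx)⟩
  · intro ρ hρ v
    obtain ⟨w, hw⟩ := h2.2 ρ hρ v
    obtain ⟨u, hu⟩ := h1.2 ρ hρ w
    exact ⟨u, fun x hx => (hw x hx).trans (hu x hx)⟩

lemma mem_entourage {K : Set (Rd d)} {ε : ℝ} {S S' : XType d r} :
    (S, S') ∈ entourage K ε ↔
      ∃ v : Rd d, ‖v‖ ≤ ε ∧ ∀ x ∈ K, (x - v ∈ S.toSet ↔ x ∈ S'.toSet) := by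
  unfold entourage
  simp only [Set.mem_setOf_eq]
  constructor
  · rintro ⟨v, hv, he⟩
    refine ⟨v, hv, fun x hx => ?_⟩
    have := Set.ext_iff.mp he x
    simp only [Set.mem_inter_iff, mem_addImg] at this
    constructor
    · intro h1; exact (this.mp ⟨h1, hx⟩).1
    · intro h1; exact (this.mpr ⟨h1, hx⟩).1
  · rintro ⟨v, hv, he⟩
    refine ⟨v, hv, ?_⟩
    ext x
    simp only [Set.mem_inter_iff, mem_addImg]
    constructor
    · rintro ⟨h1, h2⟩; exact ⟨(he x h2).mp h1, h2⟩
    · rintro ⟨h1, h2⟩; exact ⟨(he x h2).mpr h1, h2⟩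

lemma entourage_mono {K K' : Set (Rd d)} {ε ε' : ℝ} (hK : K' ⊆ K) (hε : ε ≤ ε') :
    (entourage K ε : Set (XType d r × XType d r)) ⊆ entourage K' ε' := by
  rintro ⟨S, S'⟩ h
  rw [mem_entourage] at h ⊢
  obtain ⟨v, hv, he⟩ := h
  exact ⟨v, hv.trans hε, fun x hx => he x (hK hx)⟩

lemma exists_entourage_subset {t : Set (Set (XType d r × XType d r))}
    (ht : t ⊆ entourages d r) (hfin : t.Finite) :
    ∃ K ε, IsCompact K ∧ 0 < ε ∧ (entourage K ε : Set (XType d r × XType d r)) ⊆ ⋂₀ t := by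
  revert ht
  refine Set.Finite.induction_on (motive := fun t _ => t ⊆ entourages d r → ∃ K ε, IsCompact K ∧ 0 < ε ∧ (entourage K ε : Set (XType d r × XType d r)) ⊆ ⋂₀ t) t hfin ?_ ?_
  · exact fun _ => ⟨∅, 1, isCompact_empty, one_pos, by simp⟩
  · intro E t hE htfin IH ht
    obtain ⟨K₁, ε₁, hK₁, hε₁, h₁⟩ := IH (fun x hx => ht (Set.mem_insert_of_mem _ hx))
    obtain ⟨K₀, ε₀, hK₀, hε₀, rfl⟩ := ht (Set.mem_insert _ _)
    refine ⟨K₀ ∪ K₁, min ε₀ ε₁, hK₀.union hK₁, lt_min hε₀ hε₁, ?_⟩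
    rw [Set.sInter_insert]
    exact Set.subset_inter
      (entourage_mono Set.subset_union_left (min_le_left _ _))
      ((entourage_mono Set.subset_union_right (min_le_right _ _)).trans h₁)

end Helpers

section Glue

variable {d : ℕ} {r : ℝ} [u : UniformSpace (XType d r)]
variable (hu : uniformity (XType d r) = Filter.generate (entourages d r))
include hu

lemma entourage_mem_unif {K : Set (Rd d)} (hK : IsCompact K) {ε : ℝ} (hε : 0 < ε) :
    entourage (r := r) K ε ∈ uniformity (XType d r) := by
  rw [hu]
  exact Filter.mem_generate_iff.mpr
    ⟨{entourage K ε}, Set.singleton_subset_iff.mpr ⟨K, ε, hK, hε, rfl⟩,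
      Set.finite_singleton _, by simp⟩

lemma ball_mem_nhds_XT (S : XType d r) {K : Set (Rd d)} (hK : IsCompact K)
    {ε : ℝ} (hε : 0 < ε) : {T | (S, T) ∈ entourage K ε} ∈ 𝓝 S := by
  rw [nhds_eq_comap_uniformity]
  exact Filter.preimage_mem_comap (entourage_mem_unif hu hK hε)

lemma nhds_decomp {S : XType d r} {N : Set (XType d r)} (hN : N ∈ 𝓝 S) :
    ∃ K ε, IsCompact K ∧ 0 < ε ∧ {T | (S, T) ∈ entourage K ε} ⊆ N := by
  rw [nhds_eq_comap_uniformity, hu] at hN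
  obtain ⟨U, hU, hsub⟩ := Filter.mem_comap.mp hN
  obtain ⟨t, htsub, htfin, hts⟩ := Filter.mem_generate_iff.mp hU
  obtain ⟨K, ε, hK, hε, hent⟩ := exists_entourage_subset htsub htfin
  exact ⟨K, ε, hK, hε, fun T hT => hsub (hts (hent hT))⟩

lemma mem_closure_iff_ent {O : Set (XType d r)} {S' : XType d r} :
    S' ∈ closure O ↔ ∀ K, IsCompact K → ∀ ε > (0:ℝ), ∃ T ∈ O, (S', T) ∈ entourage K ε := by
  rw [mem_closure_iff_nhds]
  constructor
  · intro h K hK ε hε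
    obtain ⟨T, hT1, hT2⟩ := h _ (ball_mem_nhds_XT hu S' hK hε)
    exact ⟨T, hT2, hT1⟩
  · intro h N hN
    obtain ⟨K, ε, hK, hε, hsub⟩ := nhds_decomp hu hN
    obtain ⟨T, hTO, hTe⟩ := h K hK ε hε
    exact ⟨T, hsub hTe, hTO⟩

lemma ultrafilter_le_nhds_XT {F : Ultrafilter (XType d r)} {S₀ : XType d r}
    (h : ∀ K, IsCompact K → ∀ ε > (0:ℝ), {T | (S₀, T) ∈ entourage K ε} ∈ F) :
    (F : Filter (XType d r)) ≤ 𝓝 S₀ := by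
  intro N hN
  obtain ⟨K, ε, hK, hε, hsub⟩ := nhds_decomp hu hN
  exact Filter.mem_of_superset (h K hK ε hε) hsub

end Glue

section XTbasic

variable {d : ℕ} {r : ℝ}

/-- Translate of an element of `X(r)`. -/
def XType.translate (S : XType d r) (v : Rd d) : XType d r where
  toSet := (fun x => v + x) '' S.toSet
  minDist := by
    intro x hx y hy hxy
    rw [mem_addImg] at hx hy
    have : x - v ≠ y - v := fun h => hxy (by
      have := congrArg (fun z => z + v) h
      simpa [sub_add_cancel] using this)
    have h := S.minDist _ hx _ hy this
    calc r ≤ dist (x - v) (y - v) := h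
    _ = dist x y := dist_sub_right x y v

lemma XType.translate_mem {S : XType d r} {v x : Rd d} :
    x ∈ (S.translate v).toSet ↔ x - v ∈ S.toSet := mem_addImg

lemma XType.translate_mem_orbit (S : XType d r) (v : Rd d) :
    S.translate v ∈ orbitXT S := ⟨v, rfl⟩

end XTbasic

section LemB

variable {d : ℕ} {r : ℝ} [u : UniformSpace (XType d r)]
variable (hu : uniformity (XType d r) = Filter.generate (entourages d r))
include hu

lemma LIclass_subset_closure_orbit (T : XType d r) : LIclass T ⊆ closure (orbitXT T) := by
  intro S' hS'
  rw [mem_closure_iff_ent hu]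
  intro K hK ε hε
  obtain ⟨ρ₀, hρ₀⟩ := hK.isBounded.subset_closedBall 0
  set ρ := max ρ₀ 1 with hρdef
  have hKρ : K ⊆ closedBall 0 ρ := hρ₀.trans (closedBall_subset_closedBall (le_max_left _ _))
  have hρ : (0:ℝ) < ρ := lt_of_lt_of_le one_pos (le_max_right _ _)
  obtain ⟨w, hw⟩ := (locIso_iff.mp hS').2 ρ hρ 0
  refine ⟨T.translate (-w), XType.translate_mem_orbit _ _, ?_⟩
  rw [mem_entourage]
  refine ⟨0, by simpa using le_of_lt hε, fun x hx => ?_⟩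
  rw [XType.translate_mem]
  have hx' : ‖x‖ ≤ ρ := by simpa [mem_closedBall_zero_iff] using hKρ hx
  have := hw x hx'
  rw [add_zero] at this
  rw [sub_zero, sub_neg_eq_add]
  exact this

end LemB

section Lattice

variable {d : ℕ} {G : Type*} [TopologicalSpace G] [AddCommGroup G] [IsTopologicalAddGroup G]
  [LocallyCompactSpace G] [T2Space G]
variable (Ltilde : AddSubgroup (Rd d × G)) [DiscreteTopology Ltilde]

lemma latticeFinite (K₁ : Set (Rd d)) (K₂ : Set G) (h₁ : IsCompact K₁) (h₂ : IsCompact K₂) :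
    {p : Rd d × G | p ∈ Ltilde ∧ p.1 ∈ K₁ ∧ p.2 ∈ K₂}.Finite := by
  have hclosed : IsClosed (Ltilde : Set (Rd d × G)) := AddSubgroup.isClosed_of_discrete
  have hcompact : IsCompact ((Ltilde : Set (Rd d × G)) ∩ K₁ ×ˢ K₂) :=
    (h₁.prod h₂).inter_left hclosed
  have hdisc : DiscreteTopology ((Ltilde : Set (Rd d × G)) ∩ K₁ ×ˢ K₂ : Set _) :=
    DiscreteTopology.of_subset inferInstance Set.inter_subset_left
  have hfin := hcompact.finite (isDiscrete_iff_discreteTopology.mpr hdisc)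
  exact hfin.subset (fun p hp => ⟨hp.1, hp.2.1, hp.2.2⟩)

variable [CompactSpace ((Rd d × G) ⧸ Ltilde)]

lemma cocompact_cover : ∃ C : Set (Rd d × G), IsCompact C ∧
    ∀ x : Rd d × G, ∃ c ∈ C, x - c ∈ Ltilde := by
  classical
  have h1 : ∀ x : Rd d × G, ∃ Kx : Set (Rd d × G), IsCompact Kx ∧ Kx ∈ 𝓝 x :=
    fun x => exists_compact_mem_nhds x
  choose Kf hKc hKn using h1
  have hopen : IsOpenMap (QuotientAddGroup.mk : Rd d × G → (Rd d × G) ⧸ Ltilde) :=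
    QuotientAddGroup.isOpenMap_coe
  have hcov : (Set.univ : Set ((Rd d × G) ⧸ Ltilde)) ⊆
      ⋃ x, (QuotientAddGroup.mk : Rd d × G → (Rd d × G) ⧸ Ltilde) '' interior (Kf x) := by
    intro y _
    obtain ⟨x, rfl⟩ := QuotientAddGroup.mk_surjective y
    exact Set.mem_iUnion.mpr ⟨x, ⟨x, mem_interior_iff_mem_nhds.mpr (hKn x), rfl⟩⟩
  obtain ⟨s, hs⟩ := isCompact_univ.elim_finite_subcover _
    (fun x => hopen _ isOpen_interior) hcov
  refine ⟨⋃ x ∈ s, Kf x, s.finite_toSet.isCompact_biUnion (fun x _ => hKc x), ?_⟩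
  intro x
  have hx := hs (Set.mem_univ ((QuotientAddGroup.mk : Rd d × G → _) x))
  rw [Set.mem_iUnion] at hx
  obtain ⟨i, hi⟩ := hx
  rw [Set.mem_iUnion] at hi
  obtain ⟨his, c, hc, hqc⟩ := hi
  refine ⟨c, Set.mem_biUnion his (interior_subset hc), ?_⟩
  have := QuotientAddGroup.eq.mp hqc
  simpa [neg_add_eq_sub] using this

end Lattice

section RelDense

set_option linter.unusedSectionVars false

variable {d : ℕ} {G : Type*} [TopologicalSpace G] [AddCommGroup G] [IsTopologicalAddGroup G]
  [LocallyCompactSpace G] [T2Space G]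
variable (Ltilde : AddSubgroup (Rd d × G)) [DiscreteTopology Ltilde]
variable [CompactSpace ((Rd d × G) ⧸ Ltilde)]

lemma relDense_cutProject (hdense : Dense (Prod.snd '' (Ltilde : Set (Rd d × G))))
    (V : Set G) (hV : IsOpen V) (hVne : V.Nonempty) :
    ∃ R > (0:ℝ), ∀ c : Rd d, ∃ z ∈ cutProject Ltilde V, ‖z - c‖ ≤ R := by
  classical
  obtain ⟨C, hCc, hCcov⟩ := cocompact_cover Ltilde
  have hC₁ : IsCompact (Prod.fst '' C) := hCc.image continuous_fst
  have hC₂ : IsCompact (Prod.snd '' C) := hCc.image continuous_snd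
  have hUopen : ∀ ℓ : Ltilde, IsOpen {h : G | -h + (ℓ : Rd d × G).2 ∈ V} := by
    intro ℓ
    exact hV.preimage (by fun_prop)
  have hcov : Prod.snd '' C ⊆ ⋃ ℓ : Ltilde, {h : G | -h + (ℓ : Rd d × G).2 ∈ V} := by
    intro h _
    have hone : IsOpen {g : G | -h + g ∈ V} := hV.preimage (by fun_prop)
    have hne : {g : G | -h + g ∈ V}.Nonempty := by
      obtain ⟨v, hv⟩ := hVne
      exact ⟨h + v, by simpa using hv⟩
    obtain ⟨g, hg1, hg2⟩ := hdense.exists_mem_open hone hne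
    obtain ⟨p, hp, rfl⟩ := hg1
    exact Set.mem_iUnion.mpr ⟨⟨p, hp⟩, hg2⟩
  obtain ⟨s, hs⟩ := hC₂.elim_finite_subcover _ hUopen hcov
  obtain ⟨M, hM⟩ := hC₁.isBounded.subset_closedBall 0
  obtain ⟨B, hB⟩ := Set.Finite.bddAbove (Set.Finite.image (fun ℓ : ↥Ltilde => ‖(ℓ : Rd d × G).1‖) s.finite_toSet)
  refine ⟨max M 0 + max B 0 + 1, by positivity, fun c => ?_⟩
  obtain ⟨cc, hccC, hlat⟩ := hCcov (c, (0 : G))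
  have hc2 : cc.2 ∈ Prod.snd '' C := ⟨cc, hccC, rfl⟩
  have := hs hc2
  rw [Set.mem_iUnion] at this
  obtain ⟨i, hi⟩ := this
  rw [Set.mem_iUnion] at hi
  obtain ⟨his, hiV⟩ := hi
  set zt : Rd d × G := ((c, (0:G)) - cc) + (i : Rd d × G) with hzt
  have hztmem : zt ∈ Ltilde := AddSubgroup.add_mem _ hlat i.2
  have hz1 : zt.1 = c - cc.1 + (i : Rd d × G).1 := by simp [hzt]
  have hz2 : zt.2 = -cc.2 + (i : Rd d × G).2 := by simp [hzt]
  refine ⟨zt.1, ⟨zt.2, by simpa using hztmem, by rw [hz2]; exact hiV⟩, ?_⟩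
  rw [hz1]
  have h1 : ‖cc.1‖ ≤ max M 0 := by
    have : cc.1 ∈ Prod.fst '' C := ⟨cc, hccC, rfl⟩
    have := hM this
    rw [mem_closedBall_zero_iff] at this
    exact this.trans (le_max_left _ _)
  have h2 : ‖(i : Rd d × G).1‖ ≤ max B 0 := by
    have : ‖(i : Rd d × G).1‖ ∈ (fun ℓ : Ltilde => ‖(ℓ : Rd d × G).1‖) '' (s : Set Ltilde) :=
      ⟨i, his, rfl⟩
    exact (hB this).trans (le_max_left _ _)
  calc ‖c - cc.1 + (i : Rd d × G).1 - c‖ = ‖(i : Rd d × G).1 - cc.1‖ := by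
        congr 1; module
  _ ≤ ‖(i : Rd d × G).1‖ + ‖cc.1‖ := norm_sub_le _ _
  _ ≤ max B 0 + max M 0 := add_le_add h2 h1
  _ ≤ max M 0 + max B 0 + 1 := by linarith

end RelDense

section Repetitive

set_option linter.unusedSectionVars false

variable {d : ℕ} {G : Type*} [TopologicalSpace G] [AddCommGroup G] [IsTopologicalAddGroup G]
  [LocallyCompactSpace G] [T2Space G]
variable (Ltilde : AddSubgroup (Rd d × G)) [DiscreteTopology Ltilde]
variable [CompactSpace ((Rd d × G) ⧸ Ltilde)]

lemma repetitive_cutProject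
    (hdense : Dense (Prod.snd '' (Ltilde : Set (Rd d × G))))
    (W : Set G) (hWc : IsCompact W)
    (hgen : frontier W ∩ (Prod.snd '' (Ltilde : Set (Rd d × G))) = ∅)
    (ρ : ℝ) (a : Rd d) :
    ∃ R > (0:ℝ), ∀ c : Rd d, ∃ z : Rd d, ‖z - c‖ ≤ R ∧
      ∀ x : Rd d, ‖x‖ ≤ ρ →
        ((x + a ∈ cutProject Ltilde W) ↔ (x + a + z ∈ cutProject Ltilde W)) := by
  classical
  obtain ⟨V₀, hV₀c, hV₀n⟩ := exists_compact_mem_nhds (0 : G)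
  have hWclosed : IsClosed W := hWc.isClosed
  have hsubc : IsCompact (W - V₀) := by
    have himg : W - V₀ = (fun p : G × G => p.1 - p.2) '' (W ×ˢ V₀) := by
      ext g
      constructor
      · rintro ⟨x, hx, y, hy, rfl⟩
        exact ⟨(x, y), ⟨hx, hy⟩, rfl⟩
      · rintro ⟨⟨x, y⟩, ⟨hx, hy⟩, rfl⟩
        exact ⟨x, hx, y, hy, rfl⟩
    rw [himg]
    exact (hWc.prod hV₀c).image continuous_sub
  set K₂ : Set G := W ∪ (W - V₀) with hK₂def
  have hK₂ : IsCompact K₂ := hWc.union hsubc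
  set F : Set (Rd d × G) := {p | p ∈ Ltilde ∧ p.1 ∈ closedBall a ρ ∧ p.2 ∈ K₂} with hFdef
  have hF : F.Finite := latticeFinite Ltilde _ _ (isCompact_closedBall a ρ) hK₂
  set f : Rd d × G → Set G :=
    fun p => if p.2 ∈ W then {g | p.2 + g ∈ interior W} else {g | p.2 + g ∈ Wᶜ} with hfdef
  have hfopen : ∀ p, IsOpen (f p) := by
    intro p
    by_cases hp : p.2 ∈ W
    · simp only [hfdef, if_pos hp]
      exact isOpen_interior.preimage (by fun_prop)
    · simp only [hfdef, if_neg hp]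
      exact (hWclosed.isOpen_compl).preimage (by fun_prop)
  set V : Set G := interior V₀ ∩ ⋂ p ∈ F, f p with hVdef
  have hVopen : IsOpen V := isOpen_interior.inter (hF.isOpen_biInter (fun p _ => hfopen p))
  have hnotfr : ∀ p : Rd d × G, p ∈ Ltilde → p.2 ∉ frontier W := by
    intro p hp hfr
    have : p.2 ∈ frontier W ∩ (Prod.snd '' (Ltilde : Set (Rd d × G))) :=
      ⟨hfr, ⟨p, hp, rfl⟩⟩
    rw [hgen] at this
    exact this
  have h0V : (0 : G) ∈ V := by
    refine ⟨mem_interior_iff_mem_nhds.mpr hV₀n, ?_⟩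
    rw [Set.mem_iInter₂]
    intro p hp
    by_cases hpw : p.2 ∈ W
    · simp only [hfdef, if_pos hpw, Set.mem_setOf_eq, add_zero]
      have hfr := hnotfr p hp.1
      rw [hWclosed.frontier_eq] at hfr
      by_contra hint
      exact hfr ⟨hpw, hint⟩
    · simp only [hfdef, if_neg hpw, Set.mem_setOf_eq, add_zero]
      exact hpw
  obtain ⟨R, hR, hRd⟩ := relDense_cutProject Ltilde hdense V hVopen ⟨0, h0V⟩
  refine ⟨R, hR, fun c => ?_⟩
  obtain ⟨z, hzV, hzc⟩ := hRd c
  obtain ⟨gz, hgzlat, hgzV⟩ := hzV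
  refine ⟨z, hzc, fun x hx => ?_⟩
  have hball : x + a ∈ closedBall a ρ := by
    rw [mem_closedBall, dist_eq_norm]
    simpa using hx
  constructor
  · rintro ⟨g, hglat, hgW⟩
    have hpF : ((x + a, g) : Rd d × G) ∈ F := ⟨hglat, hball, Or.inl hgW⟩
    have hfz := Set.mem_iInter₂.mp hgzV.2 _ hpF
    simp only [hfdef, if_pos hgW, Set.mem_setOf_eq] at hfz
    refine ⟨g + gz, ?_, interior_subset hfz⟩
    have := AddSubgroup.add_mem _ hglat hgzlat
    simpa using this
  · rintro ⟨g', hg'lat, hg'W⟩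
    have hq : ((x + a, g' - gz) : Rd d × G) ∈ Ltilde := by
      have := AddSubgroup.sub_mem _ hg'lat hgzlat
      have he : ((x + a + z, g') : Rd d × G) - (z, gz) = (x + a, g' - gz) := by
        ext <;> simp
      rwa [he] at this
    by_cases hcase : g' - gz ∈ W
    · exact ⟨g' - gz, hq, hcase⟩
    · exfalso
      have hpF : ((x + a, g' - gz) : Rd d × G) ∈ F :=
        ⟨hq, hball, Or.inr (Set.sub_mem_sub hg'W (interior_subset hgzV.1))⟩
      have hfz := Set.mem_iInter₂.mp hgzV.2 _ hpF
      simp only [hfdef, if_neg hcase, Set.mem_setOf_eq] at hfz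
      rw [sub_add_cancel] at hfz
      exact hfz hg'W

end Repetitive

section MainAux

set_option linter.unusedSectionVars false

variable {d : ℕ} {G : Type*} [TopologicalSpace G] [AddCommGroup G] [IsTopologicalAddGroup G]
  [LocallyCompactSpace G] [T2Space G]
variable (Ltilde : AddSubgroup (Rd d × G)) [DiscreteTopology Ltilde]
variable [CompactSpace ((Rd d × G) ⧸ Ltilde)]

lemma cutProject_ball_finite (W' : Set G) (hW' : IsCompact W') (R : ℝ) :
    (cutProject Ltilde W' ∩ closedBall (0 : Rd d) R).Finite := by
  have h := latticeFinite Ltilde (closedBall 0 R) W' (isCompact_closedBall _ _) hW'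
  refine (h.image Prod.fst).subset ?_
  rintro x ⟨⟨g, hg, hgW⟩, hx⟩
  exact ⟨(x, g), ⟨hg, hx, hgW⟩, rfl⟩

lemma isCompact_sub_set {A B : Set G} (hA : IsCompact A) (hB : IsCompact B) :
    IsCompact (A - B) := by
  have himg : A - B = (fun p : G × G => p.1 - p.2) '' (A ×ˢ B) := by
    ext g
    constructor
    · rintro ⟨x, hx, y, hy, rfl⟩
      exact ⟨(x, y), ⟨hx, hy⟩, rfl⟩
    · rintro ⟨⟨x, y⟩, ⟨hx, hy⟩, rfl⟩
      exact ⟨x, hx, y, hy, rfl⟩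
  rw [himg]
  exact (hA.prod hB).image continuous_sub

end MainAux


/-- for a generic model set `Λ` with minimal interpoint distance at least
`r`, the LI class of `Λ` is compact in `X(r)`, equals the closure of the translation
orbit of `Λ`, and the translation action on it is minimal (every orbit is dense). -/
theorem genericModelSet_LIclass_compact_minimal
    {d : ℕ} {G : Type*} [TopologicalSpace G] [AddCommGroup G] [IsTopologicalAddGroup G]
    [LocallyCompactSpace G] [T2Space G]
    (Ltilde : AddSubgroup (Rd d × G)) [DiscreteTopology Ltilde]
    [CompactSpace ((Rd d × G) ⧸ Ltilde)]
    (hinj : ∀ p ∈ Ltilde, ∀ q ∈ Ltilde, Prod.fst p = Prod.fst q → p = q)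
    (hdense : Dense (Prod.snd '' (Ltilde : Set (Rd d × G))))
    (W : Set G) (hWne : W.Nonempty) (hWc : IsCompact W) (hWcl : W = closure (interior W))
    (hgen : frontier W ∩ (Prod.snd '' (Ltilde : Set (Rd d × G))) = ∅)
    {r : ℝ} (hr : 0 < r)
    [u : UniformSpace (XType d r)]
    (hu : uniformity (XType d r) = Filter.generate (entourages d r))
    (t : Rd d) (Λ : XType d r)
    (hΛ : Λ.toSet = (fun x => t + x) '' cutProject Ltilde W) :
    IsCompact (LIclass Λ) ∧
    LIclass Λ = closure (orbitXT Λ) ∧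
    (∀ S' ∈ LIclass Λ, LIclass Λ ⊆ closure (orbitXT S')) := by
  classical
  have hmem : ∀ x : Rd d, x ∈ Λ.toSet ↔ x - t ∈ cutProject Ltilde W := by
    intro x; rw [hΛ]; exact mem_addImg
  -- Part 2
  have part2 : LIclass Λ = closure (orbitXT Λ) := by
    apply Set.Subset.antisymm (LIclass_subset_closure_orbit hu Λ)
    intro S' hS'cl
    rw [mem_closure_iff_ent hu] at hS'cl
    rw [LIclass, Set.mem_setOf_eq, locIso_iff]
    constructor
    · -- patches of Λ occur in S' : needs repetitivity
      intro ρ hρ v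
      obtain ⟨R, hRpos, hrep⟩ := repetitive_cutProject Ltilde hdense W hWc hgen ρ (v - t)
      obtain ⟨T, hTorb, hTent⟩ := hS'cl (closedBall 0 (ρ + R + 1)) (isCompact_closedBall _ _)
        1 one_pos
      obtain ⟨t₂, hT⟩ := hTorb
      rw [mem_entourage] at hTent
      obtain ⟨v₁, hv₁, hent⟩ := hTent
      obtain ⟨z, hzc, hz⟩ := hrep (-(v + t₂))
      refine ⟨v + z + t₂ - v₁, fun x hx => ?_⟩
      have hznorm : ‖v + z + t₂‖ ≤ R := by
        have : v + z + t₂ = z - -(v + t₂) := by module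
        rw [this]; exact hzc
      have hy : x + v + z + t₂ ∈ closedBall (0 : Rd d) (ρ + R + 1) := by
        rw [mem_closedBall_zero_iff]
        calc ‖x + v + z + t₂‖ = ‖x + (v + z + t₂)‖ := by congr 1; module
        _ ≤ ‖x‖ + ‖v + z + t₂‖ := norm_add_le _ _
        _ ≤ ρ + R := add_le_add hx hznorm
        _ ≤ ρ + R + 1 := by linarith
      have h1 : x + v ∈ Λ.toSet ↔ (x + v) - t ∈ cutProject Ltilde W := hmem _
      have h2 : (x + v) - t = x + (v - t) := by module
      have h3 := hz x hx
      have h4 := hent (x + v + z + t₂) hy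
      have h5 : x + v + z + t₂ - v₁ = x + (v + z + t₂ - v₁) := by module
      have h6 : x + v + z + t₂ ∈ T.toSet ↔ x + (v - t) + z ∈ cutProject Ltilde W := by
        rw [hT, mem_addImg, hmem]
        constructor
        · intro h; have he : x + v + z + t₂ - t₂ - t = x + (v - t) + z := by module
          rwa [he] at h
        · intro h; have he : x + (v - t) + z = x + v + z + t₂ - t₂ - t := by module
          rwa [he] at h
      rw [h1, h2, h3]
      rw [h5] at h4
      exact h6.symm.trans h4.symm
    · -- patches of S' occur in Λ : easy direction
      intro ρ hρ v
      obtain ⟨T, hTorb, hTent⟩ := hS'cl (closedBall 0 (ρ + ‖v‖ + 1)) (isCompact_closedBall _ _)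
        1 one_pos
      obtain ⟨t₂, hT⟩ := hTorb
      rw [mem_entourage] at hTent
      obtain ⟨v₁, hv₁, hent⟩ := hTent
      refine ⟨v + v₁ - t₂, fun x hx => ?_⟩
      have hy : x + v + v₁ ∈ closedBall (0 : Rd d) (ρ + ‖v‖ + 1) := by
        rw [mem_closedBall_zero_iff]
        calc ‖x + v + v₁‖ ≤ ‖x + v‖ + ‖v₁‖ := norm_add_le _ _
        _ ≤ (‖x‖ + ‖v‖) + 1 := add_le_add (norm_add_le _ _) hv₁
        _ ≤ ρ + ‖v‖ + 1 := by linarith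
      have h4 := hent (x + v + v₁) hy
      have h5 : x + v + v₁ - v₁ = x + v := by module
      rw [h5] at h4
      have h7 : x + v + v₁ ∈ T.toSet ↔ x + (v + v₁ - t₂) ∈ Λ.toSet := by
        rw [hT, mem_addImg, show x + v + v₁ - t₂ = x + (v + v₁ - t₂) from by module]
      exact h4.trans h7
  refine ⟨?_, part2, ?_⟩
  · -- compactness
    have hintW : (interior W).Nonempty := by
      rcases Set.eq_empty_or_nonempty (interior W) with h | h
      · rw [h, closure_empty] at hWcl
        exact absurd hWcl (by rintro rfl; exact hWne.ne_empty rfl)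
      · exact h
    obtain ⟨R₀, hR₀pos, hRel⟩ : ∃ R₀ > (0:ℝ), ∀ c : Rd d, ∃ y ∈ Λ.toSet, ‖y - c‖ ≤ R₀ := by
      obtain ⟨R₀, hR₀, hR₀d⟩ := relDense_cutProject Ltilde hdense (interior W)
        isOpen_interior hintW
      refine ⟨R₀, hR₀, fun c => ?_⟩
      obtain ⟨z, hz, hzc⟩ := hR₀d (c - t)
      refine ⟨t + z, ?_, ?_⟩
      · rw [hmem, show t + z - t = z from by module]
        obtain ⟨g, hg, hgi⟩ := hz
        exact ⟨g, hg, interior_subset hgi⟩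
      · rw [show t + z - c = z - (c - t) from by module]
        exact hzc
    have hP : ∀ S ∈ closure (orbitXT Λ), ∀ ρ : ℝ, ∃ uu : Rd d,
        ∀ x : Rd d, ‖x‖ ≤ ρ → (x ∈ S.toSet ↔ x - uu ∈ Λ.toSet) := by
      intro S hS ρ
      rw [mem_closure_iff_ent hu] at hS
      obtain ⟨T, ⟨t₂, hT⟩, hent⟩ := hS (closedBall 0 (ρ + 1)) (isCompact_closedBall _ _) 1 one_pos
      rw [mem_entourage] at hent
      obtain ⟨v₁, hv₁, hent⟩ := hent
      refine ⟨t₂ - v₁, fun x hx => ?_⟩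
      have hy : x + v₁ ∈ closedBall (0 : Rd d) (ρ + 1) := by
        rw [mem_closedBall_zero_iff]
        exact (norm_add_le _ _).trans (add_le_add hx hv₁)
      have h4 := hent (x + v₁) hy
      rw [show x + v₁ - v₁ = x from by module] at h4
      rw [h4, hT, mem_addImg, show x + v₁ - t₂ = x - (t₂ - v₁) from by module]
    rw [part2, isCompact_iff_ultrafilter_le_nhds]
    intro F hFp
    have hAF : closure (orbitXT Λ) ∈ F := Filter.le_principal_iff.mp hFp
    set β : XType d r → Rd d :=
      fun S => if h : (S.toSet ∩ closedBall 0 R₀).Nonempty then h.some else 0 with hβdef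
    have hβ : ∀ S ∈ closure (orbitXT Λ), β S ∈ S.toSet ∧ ‖β S‖ ≤ R₀ := by
      intro S hS
      obtain ⟨uu, huu⟩ := hP S hS R₀
      obtain ⟨y, hy, hyc⟩ := hRel (-uu)
      rw [sub_neg_eq_add] at hyc
      have hne : (S.toSet ∩ closedBall 0 R₀).Nonempty := by
        refine ⟨y + uu, ?_, mem_closedBall_zero_iff.mpr hyc⟩
        rw [huu _ hyc, show y + uu - uu = y from by module]
        exact hy
      have hβeq : β S = hne.some := by rw [hβdef]; exact dif_pos hne
      rw [hβeq]
      exact ⟨hne.some_mem.1, mem_closedBall_zero_iff.mp hne.some_mem.2⟩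
    set S₀set : Set (Rd d) :=
      {x | ∀ ε > (0:ℝ), {S : XType d r | ∃ y ∈ S.toSet, dist x y < ε} ∈ F} with hS₀def
    have hsep : ∀ x ∈ S₀set, ∀ y ∈ S₀set, x ≠ y → r ≤ dist x y := by
      intro x hx y hy hxy
      by_contra hlt
      push_neg at hlt
      have hδpos : 0 < dist x y := dist_pos.mpr hxy
      set ε₄ := min (dist x y / 3) ((r - dist x y) / 4) with hε₄
      have hε₄pos : 0 < ε₄ := lt_min (by linarith) (by linarith)
      obtain ⟨S, hS1, hS2⟩ :=
        Ultrafilter.nonempty_of_mem (Filter.inter_mem (hx ε₄ hε₄pos) (hy ε₄ hε₄pos))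
      obtain ⟨x', hx'S, hx'd⟩ := hS1
      obtain ⟨y', hy'S, hy'd⟩ := hS2
      have hne : x' ≠ y' := by
        intro h
        rw [h] at hx'd
        have h1 : dist x y ≤ dist x y' + dist y y' := by
          rw [dist_comm y y']; exact dist_triangle x y' y
        have h2 : ε₄ ≤ dist x y / 3 := min_le_left _ _
        linarith
      have hr' := S.minDist _ hx'S _ hy'S hne
      have h3 : dist x' y' ≤ dist x' x + dist x y + dist y y' := dist_triangle4 x' x y y'
      have h4 : ε₄ ≤ (r - dist x y) / 4 := min_le_right _ _
      rw [dist_comm x' x] at h3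
      linarith
    set S₀ : XType d r := ⟨S₀set, hsep⟩ with hS₀'
    have hle : (F : Filter (XType d r)) ≤ 𝓝 S₀ := by
      apply ultrafilter_le_nhds_XT hu
      intro K hK ε hε
      obtain ⟨ρ₀, hρ₀⟩ := hK.isBounded.subset_closedBall 0
      set ρ := max ρ₀ 1 with hρdef
      have hρ1 : (1:ℝ) ≤ ρ := le_max_right _ _
      have hKρ : K ⊆ closedBall 0 ρ := hρ₀.trans (closedBall_subset_closedBall (le_max_left _ _))
      set M' : ℝ := ρ + 2 with hM'def
      set M : ℝ := M' + R₀ + 2 with hMdef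
      have hR₀M : R₀ ≤ M := by simp only [hMdef, hM'def]; linarith
      have hM'M : M' + 1 ≤ M := by simp only [hMdef]; linarith
      have hρM : ρ ≤ M := by simp only [hMdef, hM'def]; linarith
      have hρM' : ρ + 1 ≤ M' := by simp only [hM'def]; linarith
      set Dm : XType d r → Set (Rd d) :=
        fun S => (fun y => y - β S) '' (S.toSet ∩ closedBall 0 M) with hDmdef
      have hDsub : ∀ S ∈ closure (orbitXT Λ),
          Dm S ⊆ cutProject Ltilde (W - W) ∩ closedBall 0 (M + R₀) := by
        intro S hS xx hxD
        obtain ⟨y, ⟨hyS, hyM⟩, rfl⟩ := hxD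
        obtain ⟨uu, huu⟩ := hP S hS M
        have hβS := hβ S hS
        have h1 : y - uu ∈ Λ.toSet := (huu y (mem_closedBall_zero_iff.mp hyM)).mp hyS
        have h2 : β S - uu ∈ Λ.toSet := (huu (β S) (hβS.2.trans hR₀M)).mp hβS.1
        rw [hmem] at h1 h2
        obtain ⟨g1, hg1, hg1W⟩ := h1
        obtain ⟨g2, hg2, hg2W⟩ := h2
        constructor
        · refine ⟨g1 - g2, ?_, Set.sub_mem_sub hg1W hg2W⟩
          have hsub := AddSubgroup.sub_mem _ hg1 hg2
          have he : ((y - uu - t, g1) : Rd d × G) - (β S - uu - t, g2) = (y - β S, g1 - g2) := by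
            rw [Prod.mk_sub_mk]
            congr 1
            module
          rwa [he] at hsub
        · rw [mem_closedBall_zero_iff]
          calc ‖y - β S‖ ≤ ‖y‖ + ‖β S‖ := norm_sub_le _ _
          _ ≤ M + R₀ := add_le_add (mem_closedBall_zero_iff.mp hyM) hβS.2
      have hfinΔ := cutProject_ball_finite Ltilde (W - W) (isCompact_sub_set hWc hWc) (M + R₀)
      have hfinD := hfinΔ.finite_subsets
      have hUF : (⋃ D ∈ {D | D ⊆ cutProject Ltilde (W - W) ∩ closedBall (0:Rd d) (M + R₀)},
          {S | S ∈ closure (orbitXT Λ) ∧ Dm S = D}) ∈ F :=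
        Filter.mem_of_superset hAF (fun S hS => Set.mem_biUnion (hDsub S hS) ⟨hS, rfl⟩)
      obtain ⟨D₀, hD₀sub, hD₀F⟩ := (Ultrafilter.finite_biUnion_mem_iff hfinD).mp hUF
      have hmapF : closedBall (0 : Rd d) R₀ ∈ Ultrafilter.map β F := by
        rw [Ultrafilter.mem_map]
        exact Filter.mem_of_superset hAF
          (fun S hS => mem_closedBall_zero_iff.mpr (hβ S hS).2)
      obtain ⟨b₀, hb₀ball, hb₀lim⟩ :=
        (isCompact_closedBall (0 : Rd d) R₀).ultrafilter_le_nhds (Ultrafilter.map β F)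
          (Filter.le_principal_iff.mpr hmapF)
      have hbconv : ∀ δ > (0:ℝ), {S | dist (β S) b₀ < δ} ∈ F := by
        intro δ hδ
        have h1 : Metric.ball b₀ δ ∈ 𝓝 b₀ := ball_mem_nhds _ hδ
        have h2 := hb₀lim h1
        rw [Ultrafilter.coe_map, Filter.mem_map] at h2
        exact h2
      have hD₀fin : D₀.Finite := hfinΔ.subset hD₀sub
      have hD₀closed : IsClosed D₀ := hD₀fin.isClosed
      have claimI : ∀ x : Rd d, ‖x‖ ≤ M' → (x ∈ S₀set ↔ x - b₀ ∈ D₀) := by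
        intro x hxM'
        constructor
        · intro hxS₀
          rw [← hD₀closed.closure_eq, Metric.mem_closure_iff]
          intro ε₂ hε₂
          set ε₃ := min (ε₂ / 3) 1 with hε₃def
          have hε₃pos : 0 < ε₃ := lt_min (by linarith) one_pos
          obtain ⟨S, hSa, hSD, hSb⟩ := Ultrafilter.nonempty_of_mem
            (Filter.inter_mem (hxS₀ ε₃ hε₃pos) (Filter.inter_mem hD₀F (hbconv ε₃ hε₃pos)))
          obtain ⟨y, hyS, hyd⟩ := hSa
          have hyM : y ∈ closedBall (0 : Rd d) M := by
            rw [mem_closedBall_zero_iff]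
            have : ‖y‖ ≤ ‖x‖ + dist x y := by
              rw [dist_eq_norm]
              calc ‖y‖ = ‖x - (x - y)‖ := by congr 1; module
              _ ≤ ‖x‖ + ‖x - y‖ := norm_sub_le _ _
            have hε₃1 : ε₃ ≤ 1 := min_le_right _ _
            linarith
          have hyD : y - β S ∈ D₀ := by
            rw [← hSD.2]
            exact ⟨y, ⟨hyS, hyM⟩, rfl⟩
          refine ⟨y - β S, hyD, ?_⟩
          have he : x - b₀ - (y - β S) = (x - y) + (β S - b₀) := by module
          rw [dist_eq_norm, he]
          have h5 : ‖x - y‖ < ε₃ := by rw [← dist_eq_norm]; exact hyd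
          have h6 : ‖β S - b₀‖ < ε₃ := by rw [← dist_eq_norm]; exact hSb
          have hε₃ε₂ : ε₃ ≤ ε₂ / 3 := min_le_left _ _
          calc ‖x - y + (β S - b₀)‖ ≤ ‖x - y‖ + ‖β S - b₀‖ := norm_add_le _ _
          _ < ε₃ + ε₃ := add_lt_add h5 h6
          _ ≤ ε₂ := by linarith
        · intro hxD₀ ε₂ hε₂
          refine Filter.mem_of_superset (Filter.inter_mem hD₀F (hbconv ε₂ hε₂)) ?_
          rintro S ⟨⟨hSA, hSD⟩, hSb⟩
          rw [← hSD] at hxD₀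
          obtain ⟨y', ⟨hy'S, _⟩, hy'e⟩ := hxD₀
          refine ⟨y', hy'S, ?_⟩
          have he : x - y' = b₀ - β S := by
            have h8 : y' - β S = x - b₀ := hy'e
            have h9 : x - y' = x - (y' - β S) - β S := by module
            rw [h9, h8]
            module
          rw [dist_eq_norm, he, show b₀ - β S = -(β S - b₀) from by module, norm_neg,
            ← dist_eq_norm]
          exact hSb
      set ε' := min ε 1 with hε'def
      have hε'pos : 0 < ε' := lt_min hε one_pos
      have hε'1 : ε' ≤ 1 := min_le_right _ _
      refine Filter.mem_of_superset (Filter.inter_mem hD₀F (hbconv ε' hε'pos)) ?_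
      rintro S ⟨⟨hSA, hSD⟩, hSb⟩
      rw [Set.mem_setOf_eq, mem_entourage]
      refine ⟨β S - b₀, ?_, fun x hxK => ?_⟩
      · rw [← dist_eq_norm]
        exact (le_of_lt hSb).trans (min_le_left _ _)
      · have hxρ : ‖x‖ ≤ ρ := mem_closedBall_zero_iff.mp (hKρ hxK)
        have hvnorm : ‖β S - b₀‖ ≤ 1 := by
          rw [← dist_eq_norm]; exact (le_of_lt hSb).trans hε'1
        have hn : ‖x - (β S - b₀)‖ ≤ M' := by
          calc ‖x - (β S - b₀)‖ ≤ ‖x‖ + ‖β S - b₀‖ := norm_sub_le _ _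
          _ ≤ ρ + 1 := add_le_add hxρ hvnorm
          _ ≤ M' := hρM'
        constructor
        · intro hxv
          have hmem' := (claimI _ hn).mp hxv
          rw [← hSD] at hmem'
          obtain ⟨y', ⟨hy'S, _⟩, hy'e⟩ := hmem'
          have h9 : y' = x := by
            have h8' : y' - β S = x - (β S - b₀) - b₀ := hy'e
            have h8 : y' - β S = x - β S := by rw [h8']; module
            exact sub_left_inj.mp h8
          rwa [h9] at hy'S
        · intro hxS
          have hxM : x ∈ closedBall (0 : Rd d) M :=
            mem_closedBall_zero_iff.mpr (hxρ.trans hρM)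
          have hxD : x - β S ∈ D₀ := by
            rw [← hSD]
            exact ⟨x, ⟨hxS, hxM⟩, rfl⟩
          refine (claimI _ hn).mpr ?_
          rw [show x - (β S - b₀) - b₀ = x - β S from by module]
          exact hxD
    refine ⟨S₀, ?_, hle⟩
    have hcl : S₀ ∈ closure (closure (orbitXT Λ)) :=
      mem_closure_iff_ultrafilter.mpr ⟨F, hAF, hle⟩
    rwa [closure_closure] at hcl
  · -- minimality
    intro S' hS' T hT
    have h1 : LocIso S'.toSet T.toSet := locIso_trans (locIso_symm hS') hT
    exact LIclass_subset_closure_orbit hu S' h1
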